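/- Let Ω = {ξ + iη ∈ ℂ : η > (1/2)·cosh(2ξ)} and define u : Ω → ℂ by u(ξ + iη) = (η²·tanh(2ξ) + ξ/2) + i·(η²/cosh(2ξ) − (1/4)·cosh(2ξ)). Then: (i) Im u(ζ) > 0 for all ζ ∈ Ω, so u maps Ω into the upper half-plane H = {w : Im w > 0}; (ii) u is a harmonic map with respect to the hyperbolic metric on H given by F(w) = −2·log(Im w), i.e. u_{ζζ̄} + (F_w ∘ u)·u_ζ·u_{ζ̄} = 0 on Ω; (iii) the Hopf density of u is identically 1: u_ζ(ζ)·(ū)_ζ(ζ) = (Im u(ζ))², i.e. e^{F∘u}·u_ζ·(ū)_ζ = 1 on Ω. -/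

import Mathlib

/-- Wirtinger derivative `∂f/∂z = (1/2)(∂f/∂x − i ∂f/∂y)`, defined from the real
Fréchet derivative. -/
noncomputable def wderiv (f : ℂ → ℂ) (z : ℂ) : ℂ :=
  (fderiv ℝ f z 1 - Complex.I * fderiv ℝ f z Complex.I) / 2

/-- Wirtinger derivative `∂f/∂z̄ = (1/2)(∂f/∂x + i ∂f/∂y)`, defined from the real
Fréchet derivative. -/
noncomputable def wderivBar (f : ℂ → ℂ) (z : ℂ) : ℂ :=
  (fderiv ℝ f z 1 + Complex.I * fderiv ℝ f z Complex.I) / 2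

/-!
On horizontal and vertical lines `u` is the restriction of a holomorphic function of `ξ`,
resp. of `η`, so both partial derivatives, hence `u_ζ` and `u_ζ̄`, are explicit.
With `c = cosh 2ξ`, `s = sinh 2ξ` and `a = 1 - i s` one finds
`u_ζ = a (η/c + 1/2)²`, `u_ζ̄ = a (η/c - 1/2)²` and `Im u = c (η/c - 1/2)(η/c + 1/2)`,
which is positive on `Ω`. Since `a ā = 1 + s² = c²` and `(ū)_ζ` is the conjugate of `u_ζ̄`,
the Hopf density `u_ζ (ū)_ζ` equals `(Im u)²`. For the harmonic map equation,
`F_w = i / Im w`, and differentiating `u_ζ̄` once more gives `u_ζζ̄ = -i a² Im u / c²`,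
which is exactly `-F_w(u) u_ζ u_ζ̄`.
-/

open Complex ComplexConjugate

theorem hasDerivAt_mk_re (x y : ℝ) : HasDerivAt (fun x : ℝ => (⟨x, y⟩ : ℂ)) 1 x := by
  have h : (fun x : ℝ => (⟨x, y⟩ : ℂ)) = fun x : ℝ => (x : ℂ) + y * I := by
    funext x; apply Complex.ext <;> simp
  rw [h]
  exact (hasDerivAt_id x).ofReal_comp.add_const _

theorem hasDerivAt_mk_im (x y : ℝ) : HasDerivAt (fun y : ℝ => (⟨x, y⟩ : ℂ)) I y := by
  have h : (fun y : ℝ => (⟨x, y⟩ : ℂ)) = fun y : ℝ => (x : ℂ) + y * I := by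
    funext y; apply Complex.ext <;> simp
  rw [h]
  simpa using ((hasDerivAt_id y).ofReal_comp.mul_const I).const_add (x : ℂ)

theorem fderiv_one_eq_of_hasDerivAt {f : ℂ → ℂ} {z a : ℂ} (hf : DifferentiableAt ℝ f z)
    (ha : HasDerivAt (fun x : ℝ => f ⟨x, z.im⟩) a z.re) : fderiv ℝ f z 1 = a :=
  (hf.hasFDerivAt.comp_hasDerivAt z.re (hasDerivAt_mk_re z.re z.im)).unique ha

theorem fderiv_I_eq_of_hasDerivAt {f : ℂ → ℂ} {z b : ℂ} (hf : DifferentiableAt ℝ f z)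
    (hb : HasDerivAt (fun y : ℝ => f ⟨z.re, y⟩) b z.im) : fderiv ℝ f z I = b :=
  (hf.hasFDerivAt.comp_hasDerivAt z.im (hasDerivAt_mk_im z.re z.im)).unique hb

theorem wderiv_eq_of_hasDerivAt {f : ℂ → ℂ} {z a b : ℂ} (hf : DifferentiableAt ℝ f z)
    (ha : HasDerivAt (fun x : ℝ => f ⟨x, z.im⟩) a z.re)
    (hb : HasDerivAt (fun y : ℝ => f ⟨z.re, y⟩) b z.im) :
    wderiv f z = (a - I * b) / 2 := by
  rw [wderiv, fderiv_one_eq_of_hasDerivAt hf ha, fderiv_I_eq_of_hasDerivAt hf hb]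

theorem wderivBar_eq_of_hasDerivAt {f : ℂ → ℂ} {z a b : ℂ} (hf : DifferentiableAt ℝ f z)
    (ha : HasDerivAt (fun x : ℝ => f ⟨x, z.im⟩) a z.re)
    (hb : HasDerivAt (fun y : ℝ => f ⟨z.re, y⟩) b z.im) :
    wderivBar f z = (a + I * b) / 2 := by
  rw [wderivBar, fderiv_one_eq_of_hasDerivAt hf ha, fderiv_I_eq_of_hasDerivAt hf hb]

theorem wderiv_conj (f : ℂ → ℂ) (z : ℂ) :
    wderiv (fun w => conj (f w)) z = conj (wderivBar f z) := by
  have h : fderiv ℝ (fun w => conj (f w)) z = conjCLE.toContinuousLinearMap.comp (fderiv ℝ f z) :=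
    conjLIE.comp_fderiv (f := f)
  simp only [wderiv, wderivBar, h, ContinuousLinearMap.comp_apply, ContinuousLinearEquiv.coe_coe,
    conjCLE_apply, map_div₀, map_add, map_mul, conj_I, map_ofNat]
  ring

theorem wderiv_neg_two_mul_log_im {w : ℂ} (hw : w.im ≠ 0) :
    wderiv (fun w => ((-2 * Real.log w.im : ℝ) : ℂ)) w = I / w.im := by
  have hf : DifferentiableAt ℝ (fun w : ℂ => ((-2 * Real.log w.im : ℝ) : ℂ)) w := by
    fun_prop (disch := assumption)
  have ha : HasDerivAt (fun _ : ℝ => ((-2 * Real.log w.im : ℝ) : ℂ)) 0 w.re :=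
    hasDerivAt_const _ _
  have hb : HasDerivAt (fun y : ℝ => ((-2 * Real.log y : ℝ) : ℂ)) ((-2 / w.im : ℝ) : ℂ) w.im := by
    simpa [div_eq_mul_inv] using ((Real.hasDerivAt_log hw).const_mul (-2)).ofReal_comp
  rw [wderiv_eq_of_hasDerivAt hf ha hb]
  have hw' : (w.im : ℂ) ≠ 0 := by exact_mod_cast hw
  push_cast
  field_simp
  ring

theorem exp_neg_two_mul_log {q : ℝ} (hq : 0 < q) : Real.exp (-2 * Real.log q) = (q ^ 2)⁻¹ := by
  rw [neg_mul, ← Nat.cast_ofNat, ← Real.log_pow, Real.exp_neg, Real.exp_log (pow_pos hq 2)]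

theorem cosh_two_mul_ofReal_ne_zero (x : ℝ) : cosh (2 * (x : ℂ)) ≠ 0 := by
  exact_mod_cast (Real.cosh_pos (2 * x)).ne'

theorem hasDerivAt_cosh_two_mul (w : ℂ) :
    HasDerivAt (fun w => cosh (2 * w)) (2 * sinh (2 * w)) w := by
  simpa [mul_comm] using ((hasDerivAt_id w).const_mul 2).ccosh

theorem hasDerivAt_sinh_two_mul (w : ℂ) :
    HasDerivAt (fun w => sinh (2 * w)) (2 * cosh (2 * w)) w := by
  simpa [mul_comm] using ((hasDerivAt_id w).const_mul 2).csinh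

noncomputable def backlundMap (ζ : ℂ) : ℂ :=
  ((ζ.im ^ 2 * Real.tanh (2 * ζ.re) + ζ.re / 2 : ℝ) : ℂ)
    + I * ((ζ.im ^ 2 / Real.cosh (2 * ζ.re) - Real.cosh (2 * ζ.re) / 4 : ℝ) : ℂ)

theorem backlundMap_eq (ζ : ℂ) :
    backlundMap ζ = ζ.im ^ 2 * (sinh (2 * ζ.re) / cosh (2 * ζ.re)) + ζ.re / 2
      + I * (ζ.im ^ 2 / cosh (2 * ζ.re) - cosh (2 * ζ.re) / 4) := by
  push_cast [backlundMap, Real.tanh_eq_sinh_div_cosh]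
  rfl

theorem backlundMap_im (ζ : ℂ) :
    (backlundMap ζ).im = ζ.im ^ 2 / Real.cosh (2 * ζ.re) - Real.cosh (2 * ζ.re) / 4 := by
  simp only [backlundMap, add_im, ofReal_im, mul_im, I_re, I_im, ofReal_re]
  ring

theorem backlundMap_im_pos {ζ : ℂ} (hζ : Real.cosh (2 * ζ.re) / 2 < ζ.im) :
    0 < (backlundMap ζ).im := by
  have hc := Real.cosh_pos (2 * ζ.re)
  rw [backlundMap_im, sub_pos, lt_div_iff₀ hc]
  nlinarith

theorem differentiable_backlundMap : Differentiable ℝ backlundMap := by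
  rw [funext backlundMap_eq]
  simp only [div_eq_mul_inv]
  fun_prop (disch := exact fun ζ => cosh_two_mul_ofReal_ne_zero ζ.re)

theorem hasDerivAt_backlundMap_re (x y : ℝ) :
    HasDerivAt (fun x : ℝ => backlundMap ⟨x, y⟩)
      ((1 - I * sinh (2 * x)) * (2 * y ^ 2 / cosh (2 * x) ^ 2 + 1 / 2)) x := by
  have hc := hasDerivAt_cosh_two_mul x
  have hc0 := cosh_two_mul_ofReal_ne_zero x
  have h := ((((hasDerivAt_sinh_two_mul x).fun_div hc hc0).const_mul ((y : ℂ) ^ 2)).add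
    ((hasDerivAt_id' (x : ℂ)).div_const 2)).add
    ((((hasDerivAt_const (x : ℂ) ((y : ℂ) ^ 2)).fun_div hc hc0).sub (hc.div_const 4)).const_mul I)
  convert h.comp_ofReal using 1
  · funext x; exact backlundMap_eq _
  · field_simp
    linear_combination (-16 * (y : ℂ) ^ 2) * cosh_sq_sub_sinh_sq (2 * (x : ℂ))

theorem hasDerivAt_backlundMap_im (x y : ℝ) :
    HasDerivAt (fun y : ℝ => backlundMap ⟨x, y⟩)
      (I * (1 - I * sinh (2 * x)) * (2 * y / cosh (2 * x))) y := by
  have hy := (hasDerivAt_id' (y : ℂ)).fun_pow 2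
  have h := ((hy.mul_const (sinh (2 * (x : ℂ)) / cosh (2 * x))).add_const ((x : ℂ) / 2)).add
    (((hy.div_const (cosh (2 * (x : ℂ)))).sub_const (cosh (2 * (x : ℂ)) / 4)).const_mul I)
  convert h.comp_ofReal using 1
  · funext y; exact backlundMap_eq _
  · have hc0 := cosh_two_mul_ofReal_ne_zero x
    field_simp
    linear_combination (-2 * sinh (2 * (x : ℂ)) * y) * I_sq

theorem wderiv_backlundMap (ζ : ℂ) :
    wderiv backlundMap ζ = (1 - I * sinh (2 * ζ.re)) * (ζ.im / cosh (2 * ζ.re) + 1 / 2) ^ 2 := by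
  rw [wderiv_eq_of_hasDerivAt (differentiable_backlundMap ζ) (hasDerivAt_backlundMap_re _ _)
    (hasDerivAt_backlundMap_im _ _)]
  linear_combination -(1 - I * sinh (2 * ζ.re)) * (ζ.im / cosh (2 * ζ.re)) * I_sq

theorem wderivBar_backlundMap :
    wderivBar backlundMap
      = fun ζ => (1 - I * sinh (2 * ζ.re)) * (ζ.im / cosh (2 * ζ.re) - 1 / 2) ^ 2 := by
  funext ζ
  rw [wderivBar_eq_of_hasDerivAt (differentiable_backlundMap ζ) (hasDerivAt_backlundMap_re _ _)
    (hasDerivAt_backlundMap_im _ _)]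
  linear_combination (1 - I * sinh (2 * ζ.re)) * (ζ.im / cosh (2 * ζ.re)) * I_sq

theorem hasDerivAt_wderivBar_backlundMap_re (x y : ℝ) :
    HasDerivAt (fun x : ℝ => wderivBar backlundMap ⟨x, y⟩)
      (-2 * I * cosh (2 * x) * (y / cosh (2 * x) - 1 / 2) ^ 2
        - 4 * (1 - I * sinh (2 * x)) * (y / cosh (2 * x) - 1 / 2) * y * sinh (2 * x)
          / cosh (2 * x) ^ 2) x := by
  have hc := hasDerivAt_cosh_two_mul x
  have hc0 := cosh_two_mul_ofReal_ne_zero x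
  have h := (((hasDerivAt_sinh_two_mul x).const_mul I).const_sub 1).fun_mul
    ((((hasDerivAt_const (x : ℂ) (y : ℂ)).fun_div hc hc0).sub_const (1 / 2)).fun_pow 2)
  rw [wderivBar_backlundMap]
  convert h.comp_ofReal using 1
  norm_num
  field_simp
  ring

theorem hasDerivAt_wderivBar_backlundMap_im (x y : ℝ) :
    HasDerivAt (fun y : ℝ => wderivBar backlundMap ⟨x, y⟩)
      (2 * (1 - I * sinh (2 * x)) * (y / cosh (2 * x) - 1 / 2) / cosh (2 * x)) y := by
  have h := ((((hasDerivAt_id' (y : ℂ)).div_const (cosh (2 * (x : ℂ)))).sub_const (1 / 2)).fun_pow 2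
    |>.const_mul (1 - I * sinh (2 * (x : ℂ))))
  rw [wderivBar_backlundMap]
  convert h.comp_ofReal using 1
  ring

theorem differentiable_wderivBar_backlundMap : Differentiable ℝ (wderivBar backlundMap) := by
  rw [wderivBar_backlundMap]
  simp only [div_eq_mul_inv]
  fun_prop (disch := exact fun ζ => cosh_two_mul_ofReal_ne_zero ζ.re)

theorem wderiv_wderivBar_backlundMap (ζ : ℂ) :
    wderiv (wderivBar backlundMap) ζ
      = -I * (1 - I * sinh (2 * ζ.re)) ^ 2 * (ζ.im ^ 2 / cosh (2 * ζ.re) ^ 2 - 1 / 4)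
          / cosh (2 * ζ.re) := by
  rw [wderiv_eq_of_hasDerivAt (differentiable_wderivBar_backlundMap ζ)
    (hasDerivAt_wderivBar_backlundMap_re _ _) (hasDerivAt_wderivBar_backlundMap_im _ _)]
  have hc0 := cosh_two_mul_ofReal_ne_zero ζ.re
  set c := cosh (2 * (ζ.re : ℂ))
  set s := sinh (2 * (ζ.re : ℂ))
  set y := (ζ.im : ℂ)
  field_simp
  linear_combination 4 * s * (c - 2 * y) * (4 * y - I * s * (c + 2 * y)) * I_sq
    - 4 * I * (c - 2 * y) ^ 2 * cosh_sq_sub_sinh_sq (2 * (ζ.re : ℂ))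

theorem backlundMap_harmonic {ζ : ℂ} (hζ : (backlundMap ζ).im ≠ 0) :
    wderiv (wderivBar backlundMap) ζ
      + wderiv (fun w => ((-2 * Real.log w.im : ℝ) : ℂ)) (backlundMap ζ)
        * wderiv backlundMap ζ * wderivBar backlundMap ζ = 0 := by
  rw [wderiv_wderivBar_backlundMap, wderiv_neg_two_mul_log_im hζ, wderiv_backlundMap,
    wderivBar_backlundMap, backlundMap_im]
  rw [backlundMap_im] at hζ
  have hc0 := cosh_two_mul_ofReal_ne_zero ζ.re
  have hQ : (ζ.im : ℂ) ^ 2 / cosh (2 * ζ.re) - cosh (2 * ζ.re) / 4 ≠ 0 := by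
    exact_mod_cast hζ
  push_cast
  field_simp
  ring

theorem wderiv_backlundMap_mul_wderiv_conj (ζ : ℂ) :
    wderiv backlundMap ζ * wderiv (fun w => conj (backlundMap w)) ζ
      = (((backlundMap ζ).im ^ 2 : ℝ) : ℂ) := by
  rw [wderiv_conj, wderiv_backlundMap, wderivBar_backlundMap, backlundMap_im]
  have hc0 := cosh_two_mul_ofReal_ne_zero ζ.re
  simp only [map_mul, map_sub, map_pow, map_div₀, map_one, map_ofNat, conj_I, conj_ofReal,
    ← cosh_conj, ← sinh_conj]
  push_cast
  set c := cosh (2 * (ζ.re : ℂ))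
  set s := sinh (2 * (ζ.re : ℂ))
  set y := (ζ.im : ℂ)
  field_simp
  linear_combination
    -16 * (c ^ 2 - 4 * y ^ 2) ^ 2 * (s ^ 2 * I_sq + cosh_sq_sub_sinh_sq (2 * (ζ.re : ℂ)))

/-- The map built from a Bäcklund transform of the one-soliton
sine-Gordon solution,
`u(ξ+iη) = (η² tanh(2ξ) + ξ/2) + i(η²/cosh(2ξ) − cosh(2ξ)/4)` on
`Ω = {η > cosh(2ξ)/2}`, maps into the upper half-plane, is harmonic for the
hyperbolic metric `F(w) = −2 log(Im w)`, and has Hopf density identically `1`: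
`u_ζ (ū)_ζ = (Im u)²`, i.e. `e^{F∘u} u_ζ (ū)_ζ = 1`. -/
theorem backlund_harmonic_map
    (Ω : Set ℂ) (hΩ : Ω = {ζ : ℂ | Real.cosh (2 * ζ.re) / 2 < ζ.im})
    (u : ℂ → ℂ)
    (hu : u = fun ζ =>
      ((ζ.im ^ 2 * Real.tanh (2 * ζ.re) + ζ.re / 2 : ℝ) : ℂ)
        + Complex.I
            * ((ζ.im ^ 2 / Real.cosh (2 * ζ.re) - Real.cosh (2 * ζ.re) / 4 : ℝ) : ℂ))
    (F : ℂ → ℝ) (hF : F = fun w => -2 * Real.log w.im) :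
    (∀ ζ ∈ Ω, 0 < (u ζ).im) ∧
    (∀ ζ ∈ Ω,
      wderiv (fun w => wderivBar u w) ζ
        + wderiv (fun w => ((F w : ℝ) : ℂ)) (u ζ) * wderiv u ζ * wderivBar u ζ = 0) ∧
    (∀ ζ ∈ Ω,
      wderiv u ζ * wderiv (fun w => starRingEnd ℂ (u w)) ζ = (((u ζ).im ^ 2 : ℝ) : ℂ)
      ∧ Complex.exp ((F (u ζ) : ℂ)) * wderiv u ζ
          * wderiv (fun w => starRingEnd ℂ (u w)) ζ = 1) := by
  subst hΩ hF
  obtain rfl : u = backlundMap := hu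
  refine ⟨fun ζ hζ => backlundMap_im_pos hζ,
    fun ζ hζ => backlundMap_harmonic (backlundMap_im_pos hζ).ne',
    fun ζ hζ => ⟨wderiv_backlundMap_mul_wderiv_conj ζ, ?_⟩⟩
  rw [mul_assoc, wderiv_backlundMap_mul_wderiv_conj, ← ofReal_exp,
    exp_neg_two_mul_log (backlundMap_im_pos hζ), ← ofReal_mul,
    inv_mul_cancel₀ (pow_pos (backlundMap_im_pos hζ) 2).ne', ofReal_one]
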